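/- Let k > 0, C₀ > 0 be constants and let (φ, d) : I → ℝ solve the reduced system φ' = -φd, d' = -½(d² + 4k² - C₀φ²) with φ(t) > 0 on I. Then the function V(t) := (d(t)² + (√C₀·φ(t) - 2k)²)/φ(t) is constant on I. -/

import Mathlib

/-! The numerator `N = d² + (√C₀·φ - 2k)²` obeys `N' = -d·N`, the same linear equation as
`φ' = -d·φ`; the quotient of two solutions of one scalar linear equation is constant. -/

theorem Set.OrdConnected.eq_of_hasDerivAt_eq_zero {E : Type*} [NormedAddCommGroup E]
    [NormedSpace ℝ E] {s : Set ℝ} (hs : s.OrdConnected) {f : ℝ → E}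
    (hf : ∀ t ∈ s, HasDerivAt f 0 t) {x y : ℝ} (hx : x ∈ s) (hy : y ∈ s) : f x = f y := by
  have h := hs.convex.norm_image_sub_le_of_norm_hasDerivWithin_le (C := 0)
    (fun t ht => (hf t ht).hasDerivWithinAt) (fun _ _ => norm_zero.le) hy hx
  rwa [zero_mul, norm_le_zero_iff, sub_eq_zero] at h

theorem HasDerivAt.fun_div_zero_of_same_logDeriv {𝕜 : Type*} [NontriviallyNormedField 𝕜]
    {f g : 𝕜 → 𝕜} {a x : 𝕜} (hf : HasDerivAt f (a * f x) x) (hg : HasDerivAt g (a * g x) x)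
    (hgx : g x ≠ 0) : HasDerivAt (fun t => f t / g t) 0 x := by
  refine (hf.fun_div hg hgx).congr_deriv ?_
  ring

theorem hasDerivAt_lyapunov_numerator {c k : ℝ} {φ d : ℝ → ℝ} {t : ℝ}
    (hφ : HasDerivAt φ (-(φ t) * d t) t)
    (hd : HasDerivAt d (-(1 / 2) * ((d t) ^ 2 + 4 * k ^ 2 - c ^ 2 * (φ t) ^ 2)) t) :
    HasDerivAt (fun s => (d s) ^ 2 + (c * φ s - 2 * k) ^ 2)
      (-d t * ((d t) ^ 2 + (c * φ t - 2 * k) ^ 2)) t := by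
  refine ((hd.fun_pow 2).fun_add (((hφ.const_mul c).sub_const (2 * k)).fun_pow 2)).congr_deriv ?_
  push_cast
  ring

theorem lyapunov_material_invariant_general (k C₀ : ℝ) (hC : 0 < C₀)
    (I : Set ℝ) (hI : I.OrdConnected) (h0 : (0 : ℝ) ∈ I)
    (φ d : ℝ → ℝ)
    (hφ : ∀ t ∈ I, HasDerivAt φ (-(φ t) * d t) t)
    (hd : ∀ t ∈ I, HasDerivAt d (-(1 / 2) * ((d t) ^ 2 + 4 * k ^ 2 - C₀ * (φ t) ^ 2)) t)
    (hpos : ∀ t ∈ I, 0 < φ t) :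
    ∀ t ∈ I, ((d t) ^ 2 + (Real.sqrt C₀ * φ t - 2 * k) ^ 2) / φ t
      = ((d 0) ^ 2 + (Real.sqrt C₀ * φ 0 - 2 * k) ^ 2) / φ 0 := by
  intro t ht
  have hV : ∀ s ∈ I,
      HasDerivAt (fun s => ((d s) ^ 2 + (Real.sqrt C₀ * φ s - 2 * k) ^ 2) / φ s) 0 s := by
    intro s hs
    have hN := hasDerivAt_lyapunov_numerator (c := Real.sqrt C₀) (k := k) (hφ s hs)
      (by rw [Real.sq_sqrt hC.le]; exact hd s hs)
    have hφ' : HasDerivAt φ (-d s * φ s) s := (hφ s hs).congr_deriv (by ring)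
    exact hN.fun_div_zero_of_same_logDeriv hφ' (hpos s hs).ne'
  exact hI.eq_of_hasDerivAt_eq_zero hV ht h0

/-- The Lyapunov function `V = (d² + (√C₀·φ - 2k)²)/φ` is a material invariant of the
reduced system `φ' = -φd`, `d' = -(d² + 4k² - C₀φ²)/2` on `{φ > 0}`. -/
theorem lyapunov_material_invariant (k C₀ : ℝ) (hk : 0 < k) (hC : 0 < C₀)
    (I : Set ℝ) (hI : I.OrdConnected) (h0 : (0 : ℝ) ∈ I)
    (φ d : ℝ → ℝ)
    (hφ : ∀ t ∈ I, HasDerivAt φ (-(φ t) * d t) t)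
    (hd : ∀ t ∈ I, HasDerivAt d (-(1 / 2) * ((d t) ^ 2 + 4 * k ^ 2 - C₀ * (φ t) ^ 2)) t)
    (hpos : ∀ t ∈ I, 0 < φ t) :
    ∀ t ∈ I, ((d t) ^ 2 + (Real.sqrt C₀ * φ t - 2 * k) ^ 2) / φ t
      = ((d 0) ^ 2 + (Real.sqrt C₀ * φ 0 - 2 * k) ^ 2) / φ 0 :=
  lyapunov_material_invariant_general k C₀ hC I hI h0 φ d hφ hd hpos
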